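/- (Saliency is optimal for Deletion with uniform-noise baseline.) For a linear model f(x) = ⟨w, x⟩ + b and the additive Uniform[0,1] noise baseline, a permutation u minimizes the expected Deletion score if and only if w_{u(1)} ≤ w_{u(2)} ≤ ... ≤ w_{u(d)} (assuming the weights are pairwise distinct; without distinctness, state the 'if' direction). -/

import Mathlib

open MeasureTheory

/-- The i.i.d. Uniform[0,1] law on `ℝ^d`. -/
noncomputable def uniformNoise (d : ℕ) : Measure (Fin d → ℝ) :=
  Measure.pi fun _ => volume.restrict (Set.Icc (0 : ℝ) 1)

/-- Expected Deletion score with additive Uniform[0,1] noise baseline for the linear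
model `y ↦ ⟨w, y⟩ + b`: the `k`-th step adds independent uniform noise to the
coordinates `u 0, …, u k`. -/
noncomputable def expectedDeletion (d : ℕ) (w x : Fin d → ℝ) (b : ℝ)
    (u : Equiv.Perm (Fin d)) : ℝ :=
  ∫ ξ, ∑ k : Fin d,
      ((∑ j, w j * (if ∃ i : Fin d, i ≤ k ∧ u i = j then x j + ξ j else x j)) + b)
    ∂(uniformNoise d)

instance uniformNoise.instProb (d : ℕ) : IsProbabilityMeasure (uniformNoise d) := by
  have : IsProbabilityMeasure (volume.restrict (Set.Icc (0 : ℝ) 1)) :=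
    ⟨by simp [Real.volume_Icc]⟩
  exact MeasureTheory.Measure.pi.instIsProbabilityMeasure _

lemma uniformNoise_map_eval (d : ℕ) (j : Fin d) :
    (uniformNoise d).map (fun ξ => ξ j) = volume.restrict (Set.Icc (0 : ℝ) 1) := by
  have : IsProbabilityMeasure (volume.restrict (Set.Icc (0 : ℝ) 1)) :=
    ⟨by simp [Real.volume_Icc]⟩
  ext s hs
  rw [Measure.map_apply (measurable_pi_apply j) hs]
  have he : (Function.eval j ⁻¹' s : Set (Fin d → ℝ)) =
      Set.pi Set.univ (Function.update (fun _ => Set.univ) j s) := Set.eval_preimage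
  rw [show (fun ξ : Fin d → ℝ => ξ j) ⁻¹' s = Function.eval j ⁻¹' s from rfl, he,
    uniformNoise, Measure.pi_pi]
  rw [Finset.prod_eq_single j]
  · simp
  · intro i _ hij; simp [Function.update_of_ne hij]
  · simp

lemma integrable_eval (d : ℕ) (j : Fin d) :
    Integrable (fun ξ : Fin d → ℝ => ξ j) (uniformNoise d) := by
  have h := uniformNoise_map_eval d j
  have hi : Integrable (id : ℝ → ℝ) (volume.restrict (Set.Icc (0:ℝ) 1)) :=
    continuous_id.integrableOn_Icc
  rw [← h] at hi
  exact (integrable_map_measure hi.aestronglyMeasurable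
    (measurable_pi_apply j).aemeasurable).mp hi

lemma integral_eval (d : ℕ) (j : Fin d) :
    ∫ ξ, ξ j ∂(uniformNoise d) = 1/2 := by
  have h2 := integral_map (μ := uniformNoise d) (φ := fun ξ => ξ j) (f := fun y : ℝ => y)
    (measurable_pi_apply j).aemeasurable measurable_id.aestronglyMeasurable
  rw [← h2, uniformNoise_map_eval]
  rw [MeasureTheory.integral_Icc_eq_integral_Ioc,
    ← intervalIntegral.integral_of_le (by norm_num : (0:ℝ) ≤ 1)]
  simp

lemma card_filter_le (d : ℕ) (a : Fin d) :
    (Finset.univ.filter fun k => a ≤ k).card = d - a := by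
  have : (Finset.univ.filter fun k => a ≤ k) = Finset.Ici a := by
    ext k; simp
  rw [this, Fin.card_Ici]

lemma integrand_eq (d : ℕ) (w x : Fin d → ℝ) (b : ℝ) (u : Equiv.Perm (Fin d))
    (ξ : Fin d → ℝ) :
    (∑ k : Fin d,
      ((∑ j, w j * (if ∃ i : Fin d, i ≤ k ∧ u i = j then x j + ξ j else x j)) + b))
    = (d : ℝ) * ((∑ j, w j * x j) + b)
      + ∑ j, ((d - (u.symm j : ℕ) : ℕ) : ℝ) * (w j * ξ j) := by
  have hcond : ∀ (k j : Fin d), (∃ i : Fin d, i ≤ k ∧ u i = j) ↔ u.symm j ≤ k := by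
    intro k j
    constructor
    · rintro ⟨i, hik, rfl⟩; simpa using hik
    · intro h; exact ⟨u.symm j, h, by simp⟩
  have h1 : ∀ k : Fin d,
      ((∑ j, w j * (if ∃ i : Fin d, i ≤ k ∧ u i = j then x j + ξ j else x j)) + b)
      = ((∑ j, w j * x j) + b) + ∑ j, (if u.symm j ≤ k then w j * ξ j else 0) := by
    intro k
    have : ∀ j, w j * (if ∃ i : Fin d, i ≤ k ∧ u i = j then x j + ξ j else x j)
        = w j * x j + (if u.symm j ≤ k then w j * ξ j else 0) := by
      intro j
      simp only [hcond k j]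
      by_cases h : u.symm j ≤ k <;> simp [h] <;> ring
    simp only [this, Finset.sum_add_distrib]
    ring
  have h2 : (∑ k : Fin d, ∑ j, (if u.symm j ≤ k then w j * ξ j else 0))
      = ∑ j, ((d - (u.symm j : ℕ) : ℕ) : ℝ) * (w j * ξ j) := by
    rw [Finset.sum_comm]
    refine Finset.sum_congr rfl fun j _ => ?_
    rw [← Finset.sum_filter, Finset.sum_const, card_filter_le, nsmul_eq_mul]
  simp only [h1, Finset.sum_add_distrib, Finset.sum_const, Finset.card_univ,
    Fintype.card_fin, nsmul_eq_mul, h2]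
  ring

lemma expectedDeletion_eq (d : ℕ) (w x : Fin d → ℝ) (b : ℝ) (u : Equiv.Perm (Fin d)) :
    expectedDeletion d w x b u
      = (d : ℝ) * ((∑ j, w j * x j) + b)
        + (1/2) * ∑ i : Fin d, ((d - (i : ℕ) : ℕ) : ℝ) * w (u i) := by
  unfold expectedDeletion
  have heq : (fun ξ : Fin d → ℝ => ∑ k : Fin d,
      ((∑ j, w j * (if ∃ i : Fin d, i ≤ k ∧ u i = j then x j + ξ j else x j)) + b))
      = fun ξ => (d : ℝ) * ((∑ j, w j * x j) + b)
        + ∑ j, (((d - (u.symm j : ℕ) : ℕ) : ℝ) * w j) * ξ j := by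
    funext ξ
    rw [integrand_eq]
    congr 1
    exact Finset.sum_congr rfl fun j _ => by ring
  rw [heq]
  have hint : ∀ j : Fin d, Integrable
      (fun ξ : Fin d → ℝ => (((d - (u.symm j : ℕ) : ℕ) : ℝ) * w j) * ξ j)
      (uniformNoise d) := fun j => (integrable_eval d j).const_mul _
  rw [integral_add (integrable_const _) (integrable_finset_sum _ fun j _ => hint j),
    integral_const, integral_finset_sum _ fun j _ => hint j]
  simp only [integral_const_mul, _root_.integral_eval, measure_univ, probReal_univ, ENNReal.toReal_one, one_smul]
  congr 1
  have := Equiv.sum_comp u (fun j => (((d - (u.symm j : ℕ) : ℕ) : ℝ) * w j) * (1/2))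
  rw [← this]
  simp only [Equiv.symm_apply_apply]
  rw [Finset.mul_sum]
  exact Finset.sum_congr rfl fun i _ => by ring

lemma swap_sum (d : ℕ) (f g : Fin d → ℝ) (i j : Fin d) (hij : i ≠ j) :
    ∑ k, f k * g (Equiv.swap i j k)
      = (∑ k, f k * g k) + (f i - f j) * (g j - g i) := by
  have key : ∑ k : Fin d, (f k * g (Equiv.swap i j k) - f k * g k)
      = (f i * g (Equiv.swap i j i) - f i * g i)
        + (f j * g (Equiv.swap i j j) - f j * g j) := by
    refine Finset.sum_eq_add_of_mem i j (Finset.mem_univ _) (Finset.mem_univ _) hij ?_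
    intro k _ hk
    rw [Equiv.swap_apply_of_ne_of_ne hk.1 hk.2]
    ring
  rw [Equiv.swap_apply_left, Equiv.swap_apply_right] at key
  have h2 : ∑ k : Fin d, (f k * g (Equiv.swap i j k) - f k * g k)
      = (∑ k, f k * g (Equiv.swap i j k)) - ∑ k, f k * g k := Finset.sum_sub_distrib _ _
  rw [h2] at key
  linarith

/-- Saliency is optimal for Deletion with the uniform-noise baseline: assuming the
weights are pairwise distinct, a permutation `u` minimizes the expected Deletion score
if and only if `w (u 0) ≤ w (u 1) ≤ …` is nondecreasing. -/
theorem expected_deletion_min_iff_saliency_order (d : ℕ) (w x : Fin d → ℝ) (b : ℝ)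
    (hdist : ∀ i j : Fin d, i ≠ j → w i ≠ w j)
    (u : Equiv.Perm (Fin d)) :
    (∀ v : Equiv.Perm (Fin d),
        expectedDeletion d w x b u ≤ expectedDeletion d w x b v) ↔
      (∀ i j : Fin d, i ≤ j → w (u i) ≤ w (u j)) := by
  set c : Fin d → ℝ := fun i => ((d - (i : ℕ) : ℕ) : ℝ) with hc
  have hE : ∀ v : Equiv.Perm (Fin d), expectedDeletion d w x b v
      = (d : ℝ) * ((∑ j, w j * x j) + b) + (1/2) * ∑ i, c i * w (v i) :=
    fun v => expectedDeletion_eq d w x b v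
  have hEle : ∀ v₁ v₂ : Equiv.Perm (Fin d),
      (expectedDeletion d w x b v₁ ≤ expectedDeletion d w x b v₂
        ↔ ∑ i, c i * w (v₁ i) ≤ ∑ i, c i * w (v₂ i)) := by
    intro v₁ v₂
    rw [hE v₁, hE v₂]
    constructor <;> intro h <;> linarith
  constructor
  · -- min → sorted
    intro hmin i j hij
    by_contra hno
    push_neg at hno
    have hne : i ≠ j := by
      rintro rfl; exact lt_irrefl _ hno
    have hilt : i < j := lt_of_le_of_ne hij hne
    have hkey := swap_sum d c (fun k => w (u k)) i j hne
    have hv := (hEle u ((Equiv.swap i j).trans u)).mp (hmin ((Equiv.swap i j).trans u))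
    simp only [Equiv.trans_apply] at hv
    rw [hkey] at hv
    have hci : c j < c i := by
      have h1 : (j : ℕ) < d := j.isLt
      have h2 : (i : ℕ) < (j : ℕ) := hilt
      have : d - (j : ℕ) < d - (i : ℕ) := by omega
      exact_mod_cast Nat.cast_lt.mpr this
    nlinarith [mul_pos (sub_pos.mpr hci) (sub_pos.mpr hno)]
  · -- sorted → min
    intro hmono v
    rw [hEle]
    have hanti : Antivary c (w ∘ u) := by
      intro i j hlt
      have hij : i < j := by
        by_contra h
        push_neg at h
        exact absurd (hmono j i h) (not_le.mpr hlt)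
      have : (d - (j : ℕ)) ≤ (d - (i : ℕ)) := Nat.sub_le_sub_left hij.le d
      exact_mod_cast Nat.cast_le.mpr this
    have := hanti.sum_smul_le_sum_smul_comp_perm (σ := v.trans u.symm)
    simpa [smul_eq_mul, Function.comp] using this
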